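/- arXiv:1204.5011 — 2 statements merged into one kernel-verified Lean document; each statement's English description precedes it below -/
import Mathlib

section
/- Let n be an odd integer with binary expansion n = 2^{e_1} + 2^{e_2} + ⋯ + 2^{e_N} + 1, where N ≥ 2 and e_1 > e_2 > ⋯ > e_N > 0. If e_1 − e_2 = 2, then the length of the sequence of lower halves of n is l(n) = e_1 − 1 and its tail is t(n) = 2. -/
/-- The lower half of a positive integer: `lh m = ⌊m/2⌋`. -/
def lh (m : ℕ) : ℕ := m / 2

/-- The length of the sequence of lower halves of `n`: the least positive `i`
such that the `i`-th iterate of `lh` at `n` lies in `{2, 3, 4}`. -/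
noncomputable def lhLen (n : ℕ) : ℕ :=
  sInf {i : ℕ | 0 < i ∧ lh^[i] n ∈ ({2, 3, 4} : Set ℕ)}

/-- The tail of the sequence of lower halves of `n`: its last term. -/
noncomputable def lhTail (n : ℕ) : ℕ := lh^[lhLen n] n

/-!
With `e 0 = e 1 + 2`, write `n = 2^(e 1 + 2) + 2^(e 1) + r`, where `r = 2^(e 2) + ⋯ + 1` is a sum of
distinct powers of two below `2^(e 1)`, so `r < 2^(e 1)`. Hence `n / 2^(e 1) = 5`: the lower halves
stay `≥ 5` for the first `e 1` steps, and step `e 1 + 1 = e 0 - 1` lands on `⌊5/2⌋ = 2`.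
-/

lemma lh_iterate (k m : ℕ) : lh^[k] m = m / 2 ^ k := by
  induction k with
  | zero => simp
  | succ k ih =>
    rw [Function.iterate_succ_apply', ih, lh, Nat.div_div_eq_div_mul, pow_succ]

lemma lhLen_eq_and_lhTail_eq_of_div_two_pow_eq_five {n j : ℕ} (h : n / 2 ^ j = 5) :
    lhLen n = j + 1 ∧ lhTail n = 2 := by
  have hstep : lh^[j + 1] n = 2 := by
    rw [lh_iterate, pow_succ, ← Nat.div_div_eq_div_mul, h]
  have hlarge : ∀ i ≤ j, 5 ≤ lh^[i] n := fun i hi =>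
    h ▸ (lh_iterate i n).symm ▸
      Nat.div_le_div_left (Nat.pow_le_pow_right two_pos hi) (Nat.two_pow_pos i)
  have hlen : lhLen n = j + 1 := by
    refine le_antisymm (Nat.sInf_le ⟨j.succ_pos, by simp [hstep]⟩) ?_
    refine le_csInf ⟨j + 1, j.succ_pos, by simp [hstep]⟩ fun i ⟨_, hi⟩ => ?_
    by_contra! hij
    have := hlarge i (Nat.le_of_lt_succ hij)
    simp only [Set.mem_insert_iff, Set.mem_singleton_iff] at hi
    omega
  exact ⟨hlen, by rw [lhTail, hlen, hstep]⟩

-- The `+ 1` is the bit `2^0`, which is free because all the exponents are positive.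
lemma sum_Ico_two_pow_add_one_lt {N k : ℕ} {e : ℕ → ℕ}
    (hanti : ∀ i j : ℕ, i < j → j < N → e j < e i) (hpos : ∀ i : ℕ, i < N → 0 < e i)
    (hk : k < N) :
    ∑ i ∈ Finset.Ico (k + 1) N, 2 ^ e i + 1 < 2 ^ e k := by
  have hinj : Set.InjOn e (Finset.Ico (k + 1) N) := fun i hi j hj hij => by
    simp only [Finset.coe_Ico, Set.mem_Ico] at hi hj
    by_contra hne
    rcases Nat.lt_or_gt_of_ne hne with h | h
    · exact (hanti i j h hj.2).ne' hij
    · exact (hanti j i h hi.2).ne hij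
  have hzero : 0 ∉ (Finset.Ico (k + 1) N).image e := by
    simp only [Finset.mem_image, Finset.mem_Ico, not_exists, not_and]
    exact fun i hi => (hpos i hi.2).ne'
  calc ∑ i ∈ Finset.Ico (k + 1) N, 2 ^ e i + 1
      = ∑ m ∈ insert 0 ((Finset.Ico (k + 1) N).image e), 2 ^ m := by
        rw [Finset.sum_insert hzero, Finset.sum_image hinj, pow_zero, add_comm]
    _ < 2 ^ e k := by
        refine Nat.geomSum_lt le_rfl fun m hm => ?_
        simp only [Finset.mem_insert, Finset.mem_image, Finset.mem_Ico] at hm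
        rcases hm with rfl | ⟨i, hi, rfl⟩
        · exact hpos k hk
        · exact hanti k i (by omega) hi.2

theorem lhLen_lhTail_of_gap_two (n N : ℕ) (e : ℕ → ℕ) (hN : 2 ≤ N)
    (hanti : ∀ i j : ℕ, i < j → j < N → e j < e i)
    (hpos : ∀ i : ℕ, i < N → 0 < e i)
    (hn : n = (∑ i ∈ Finset.range N, 2 ^ e i) + 1)
    (hgap : e 0 = e 1 + 2) :
    lhLen n = e 0 - 1 ∧ lhTail n = 2 := by
  set r := ∑ i ∈ Finset.Ico 2 N, 2 ^ e i + 1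
  have hr : r < 2 ^ e 1 := sum_Ico_two_pow_add_one_lt hanti hpos (by omega)
  have hsplit : n = 5 * 2 ^ e 1 + r := by
    rw [hn, Finset.range_eq_Ico, Finset.sum_eq_sum_Ico_succ_bot (by omega),
      Finset.sum_eq_sum_Ico_succ_bot (by omega), hgap, pow_add]
    ring
  have hfive : n / 2 ^ e 1 = 5 := by
    rw [hsplit, mul_comm, Nat.mul_add_div (Nat.two_pow_pos _), Nat.div_eq_of_lt hr]
  obtain ⟨hlen, htail⟩ := lhLen_eq_and_lhTail_eq_of_div_two_pow_eq_five hfive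
  exact ⟨by omega, htail⟩
end

section
/- For every prime p > 7, one has (t(p) + 2·l(p) − 1)/p < (1 + l(p))/2^{l(p)} as real numbers, where l(p) and t(p) are the length and tail of the sequence of lower halves of p. -/
/-!
Since `lhTail p = p / 2 ^ lhLen p`, we have `2 ^ l * t ≤ p` with `l ≥ 1` and `t ≥ 2`, hence
`(1 + l) * p ≥ 2 ^ l * (t + l * t) > 2 ^ l * (t + 2 * l - 1)`.
-/

lemma lh_iterate_eq_div (i n : ℕ) : lh^[i] n = n / 2 ^ i := by
  induction i generalizing n with
  | zero => simp
  | succ k ih =>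
    rw [Function.iterate_succ_apply, ih, lh.eq_def, Nat.div_div_eq_div_mul, pow_succ']

lemma two_pow_lhLen_mul_lhTail_le (n : ℕ) : 2 ^ lhLen n * lhTail n ≤ n := by
  rw [lhTail, lh_iterate_eq_div, mul_comm]
  exact Nat.div_mul_le_self n _

lemma exists_lh_iterate_mem {n : ℕ} (hn : 4 ≤ n) :
    ∃ i, 0 < i ∧ lh^[i] n ∈ ({2, 3, 4} : Set ℕ) := by
  have hlog : 2 ≤ Nat.log 2 n := Nat.le_log_of_pow_le (by norm_num) (by simpa using hn)
  have hpow : 2 ^ (Nat.log 2 n - 1) * 2 = 2 ^ Nat.log 2 n := by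
    rw [← pow_succ, Nat.sub_add_cancel (by omega)]
  have hlow : 2 ≤ n / 2 ^ (Nat.log 2 n - 1) :=
    (Nat.le_div_iff_mul_le (by positivity)).2 <| by
      rw [mul_comm, hpow]; exact Nat.pow_log_le_self 2 (by omega)
  have hhigh : n / 2 ^ (Nat.log 2 n - 1) < 4 :=
    Nat.div_lt_of_lt_mul <| by
      rw [show 4 = 2 * 2 by rfl, ← mul_assoc, hpow, ← pow_succ]
      exact Nat.lt_pow_succ_log_self (by norm_num) n
  refine ⟨Nat.log 2 n - 1, by omega, ?_⟩
  rw [lh_iterate_eq_div]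
  interval_cases n / 2 ^ (Nat.log 2 n - 1) <;> simp

lemma lhLen_pos_and_lhTail_mem {n : ℕ} (hn : 4 ≤ n) :
    0 < lhLen n ∧ lhTail n ∈ ({2, 3, 4} : Set ℕ) :=
  Nat.sInf_mem (exists_lh_iterate_mem hn)

lemma add_two_mul_sub_one_div_lt_one_add_div {x l t p : ℝ} (hx : 0 < x) (hl : 1 ≤ l)
    (ht : 2 ≤ t) (hp : x * t ≤ p) : (t + 2 * l - 1) / p < (1 + l) / x := by
  have hp_pos : 0 < p := by nlinarith
  rw [div_lt_div_iff₀ hp_pos hx]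
  calc (t + 2 * l - 1) * x < (t + l * t) * x := by
        gcongr
        nlinarith
    _ = (1 + l) * (x * t) := by ring
    _ ≤ (1 + l) * p := by gcongr

theorem ratio_lt_f_of_len_general (p : ℕ) (h7 : 7 < p) :
    ((lhTail p : ℝ) + 2 * (lhLen p : ℝ) - 1) / (p : ℝ)
      < (1 + (lhLen p : ℝ)) / 2 ^ (lhLen p) := by
  obtain ⟨hl, ht⟩ := lhLen_pos_and_lhTail_mem (show 4 ≤ p by omega)
  have ht2 : 2 ≤ lhTail p := by
    simp only [Set.mem_insert_iff, Set.mem_singleton_iff] at ht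
    omega
  exact add_two_mul_sub_one_div_lt_one_add_div (by positivity) (by exact_mod_cast hl)
    (by exact_mod_cast ht2) (by exact_mod_cast two_pow_lhLen_mul_lhTail_le p)

theorem ratio_lt_f_of_len (p : ℕ) (hp : p.Prime) (h7 : 7 < p) :
    ((lhTail p : ℝ) + 2 * (lhLen p : ℝ) - 1) / (p : ℝ)
      < (1 + (lhLen p : ℝ)) / 2 ^ (lhLen p) :=
  ratio_lt_f_of_len_general p h7
end
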